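/- Let n and k be integers with k ≥ 2 and n ≥ 3k+1. Then there exists an S_{k,1}-free oriented graph on n vertices with at least ⌊(n+k−1)²/4⌋ arcs; that is, ex_ori(n, S_{k,1}) ≥ ⌊(n+k−1)²/4⌋. -/

import Mathlib

/-- An oriented graph on `V`: an arc relation in which no two vertices are
joined by arcs in both directions (in particular it is irreflexive). -/
def IsOriented {V : Type*} (A : V → V → Prop) : Prop :=
  ∀ u v : V, A u v → ¬ A v u

/-- The in-degree of `v`: the number of in-neighbours of `v`. -/
noncomputable def inDeg {V : Type*} (A : V → V → Prop) (v : V) : ℕ :=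
  {u : V | A u v}.ncard

/-- The number of arcs of the digraph. -/
noncomputable def arcCount {V : Type*} (A : V → V → Prop) : ℕ :=
  {p : V × V | A p.1 p.2}.ncard

/-- A copy of `S_{k,1}` (the 1-subdivision of the in-star of order `k+1`)
centered at `v`: pairwise distinct vertices `v, u 0, …, u (k-1), w 0, …, w (k-1)`
with arcs `w i → u i` and `u i → v`. -/
def HasSCopyAt {V : Type*} (A : V → V → Prop) (k : ℕ) (v : V) : Prop :=
  ∃ u w : Fin k → V,
    Function.Injective u ∧ Function.Injective w ∧
    (∀ i j : Fin k, u i ≠ w j) ∧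
    (∀ i : Fin k, u i ≠ v) ∧ (∀ i : Fin k, w i ≠ v) ∧
    (∀ i : Fin k, A (w i) (u i)) ∧ (∀ i : Fin k, A (u i) v)

/-- `A` is `S_{k,1}`-free: no copy of `S_{k,1}` with any center. -/
def SFree {V : Type*} (A : V → V → Prop) (k : ℕ) : Prop :=
  ∀ v : V, ¬ HasSCopyAt A k v

/-!
Split the vertices into `X`, of size `b = ⌊(n+k-1)/2⌋`, and `Y`, of size `n - b`. Put every arc from
`Y` to `X`, and inside `X ≅ ℤ/b` the circulant `x → x+1, …, x+k-1`, which is oriented since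
`b ≥ 2k - 1`. The middle vertex `u` of a path `w → u → v` of `S_{k,1}` needs an in-neighbour, so
`u ∈ X` and hence `v ∈ X`; but in `X` every vertex has only `k - 1` in-neighbours. The number of arcs
is `b(n-b) + b(k-1) = b(n+k-1-b) = ⌊(n+k-1)²/4⌋`.
-/

section General

variable {V W : Type*}

theorem arcCount_eq_sum_inDeg [Fintype V] (A : V → V → Prop) :
    arcCount A = ∑ v, inDeg A v := by
  classical
  simp only [arcCount, inDeg, Set.ncard_eq_toFinset_card', Set.toFinset_ofPred]
  rw [Finset.card_filter, Fintype.sum_prod_type, Finset.sum_comm]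
  simp only [Finset.card_filter]

theorem HasSCopyAt.le_ncard [Finite V] {A : V → V → Prop} {k : ℕ} {v : V}
    (h : HasSCopyAt A k v) : k ≤ {u | A u v ∧ ∃ w, A w u}.ncard := by
  obtain ⟨u, w, hu, -, -, -, -, hwu, huv⟩ := h
  calc k = (Set.range u).ncard := by simp [Set.ncard_range_of_injective hu]
    _ ≤ _ := Set.ncard_le_ncard (by rintro _ ⟨i, rfl⟩; exact ⟨huv i, w i, hwu i⟩)

theorem sFree_of_ncard_lt [Finite V] {A : V → V → Prop} {k : ℕ}
    (h : ∀ v, {u | A u v ∧ ∃ w, A w u}.ncard < k) : SFree A k :=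
  fun v hv => (hv.le_ncard.trans_lt (h v)).false

theorem IsOriented.comap {C : W → W → Prop} (hC : IsOriented C) (f : V → W) :
    IsOriented fun u v => C (f u) (f v) :=
  fun u v => hC (f u) (f v)

theorem SFree.comap {C : W → W → Prop} {k : ℕ} (hC : SFree C k) {f : V → W}
    (hf : Function.Injective f) : SFree (fun u v => C (f u) (f v)) k := by
  rintro v ⟨u, w, hu, hw, huw, huv, hwv, hwu, hv⟩
  exact hC (f v) ⟨f ∘ u, f ∘ w, hf.comp hu, hf.comp hw, fun i j => hf.ne (huw i j),
    fun i => hf.ne (huv i), fun i => hf.ne (hwv i), hwu, hv⟩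

theorem arcCount_comap_equiv (C : W → W → Prop) (e : V ≃ W) :
    arcCount (fun u v => C (e u) (e v)) = arcCount C := by
  exact Set.ncard_preimage_of_injective_subset_range (s := {p : W × W | C p.1 p.2})
    (Equiv.prodCongr e e).injective (by simp)

end General

section WithSources

variable {X Y : Type*}

def withSources (B : X → X → Prop) (Y : Type*) : X ⊕ Y → X ⊕ Y → Prop
  | .inl x, .inl x' => B x x'
  | .inr _, .inl _ => True
  | _, .inr _ => False

theorem isOriented_withSources {B : X → X → Prop} (hB : IsOriented B) :
    IsOriented (withSources B Y) := by
  rintro (x | _) (x' | _)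
  · exact hB x x'
  all_goals simp [withSources]

theorem sFree_withSources [Finite X] [Finite Y] {B : X → X → Prop} {k : ℕ} (hk : 0 < k)
    (hB : ∀ x, inDeg B x < k) : SFree (withSources B Y) k := by
  refine sFree_of_ncard_lt ?_
  rintro (x | y)
  · calc _ ≤ (Sum.inl '' {x' | B x' x} : Set (X ⊕ Y)).ncard := by
          refine Set.ncard_le_ncard ?_
          rintro (x' | y') ⟨hx', w, hw⟩
          · exact ⟨x', hx', rfl⟩
          · cases w <;> exact hw.elim
      _ = inDeg B x := Set.ncard_image_of_injective _ Sum.inl_injective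
      _ < k := hB x
  · simpa [withSources] using hk

theorem inDeg_withSources_inl [Finite X] [Finite Y] (B : X → X → Prop) (x : X) :
    inDeg (withSources B Y) (.inl x) = inDeg B x + Nat.card Y := by
  have : {u | withSources B Y u (.inl x)} = Sum.inl '' {x' | B x' x} ∪ Set.range Sum.inr := by
    ext (x' | y) <;> simp [withSources]
  rw [inDeg, this, Set.ncard_union_eq, Set.ncard_image_of_injective _ Sum.inl_injective,
    Set.ncard_range_of_injective Sum.inr_injective, inDeg]
  exact Set.disjoint_left.2 (by rintro _ ⟨x', -, rfl⟩ ⟨y, hy⟩; cases hy)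

theorem inDeg_withSources_inr (B : X → X → Prop) (y : Y) :
    inDeg (withSources B Y) (.inr y) = 0 := by
  simp [inDeg, withSources]

theorem arcCount_withSources [Fintype X] [Fintype Y] {B : X → X → Prop} {d : ℕ}
    (hB : ∀ x, inDeg B x = d) :
    arcCount (withSources B Y) = Fintype.card X * (d + Fintype.card Y) := by
  simp [arcCount_eq_sum_inDeg, Fintype.sum_sum_type, inDeg_withSources_inl, hB,
    inDeg_withSources_inr, Nat.card_eq_fintype_card]

end WithSources

section Circulant

def circulant (b k : ℕ) (x y : ZMod b) : Prop := (y - x).val ∈ Set.Ico 1 k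

theorem isOriented_circulant {b k : ℕ} [NeZero b] (h : 2 * k ≤ b + 1) :
    IsOriented (circulant b k) := by
  intro x y ⟨hxy1, hxy2⟩ ⟨hyx1, hyx2⟩
  have : NeZero (y - x) := ⟨fun h0 => by simp [h0] at hxy1⟩
  rw [← neg_sub, ZMod.val_neg_of_ne_zero] at hyx1 hyx2
  omega

theorem inDeg_circulant {b k : ℕ} [NeZero b] (h : k ≤ b) (y : ZMod b) :
    inDeg (circulant b k) y = k - 1 := by
  have hval : (ZMod.val ⁻¹' Set.Ico 1 k : Set (ZMod b)).ncard = k - 1 := by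
    rw [Set.ncard_preimage_of_injective_subset_range (ZMod.val_injective b), ← Finset.coe_Ico,
      Set.ncard_coe_finset, Nat.card_Ico]
    intro d hd
    exact ⟨d, ZMod.val_cast_of_lt (by simp at hd; omega)⟩
  calc inDeg (circulant b k) y = ((y - ·) ⁻¹' (ZMod.val ⁻¹' Set.Ico 1 k)).ncard := rfl
    _ = k - 1 := by
      rw [Set.ncard_preimage_of_injective_subset_range sub_right_injective
        fun d _ => ⟨y - d, sub_sub_cancel y d⟩, hval]

end Circulant

theorem sq_div_four_eq (m : ℕ) : m ^ 2 / 4 = m / 2 * (m - m / 2) := by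
  obtain ⟨q, rfl | rfl⟩ := Nat.even_or_odd' m
  · rw [show (2 * q) ^ 2 = 4 * (q * q) by ring, show 2 * q / 2 = q by omega,
      show 2 * q - q = q by omega]
    omega
  · rw [show (2 * q + 1) ^ 2 = 4 * (q * q + q) + 1 by ring, show (2 * q + 1) / 2 = q by omega,
      show 2 * q + 1 - q = q + 1 by omega]
    rw [Nat.mul_add_div (by norm_num : 0 < 4)]
    ring

/-- for `k ≥ 2` and `n ≥ 3k+1` there exists an `S_{k,1}`-free
oriented graph on `n` vertices with at least `⌊(n+k-1)²/4⌋` arcs, i.e.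
`ex_ori(n, S_{k,1}) ≥ ⌊(n+k-1)²/4⌋`. -/
theorem exOri_lower_bound (n k : ℕ) (hk : 2 ≤ k) (hn : 3 * k + 1 ≤ n) :
    ∃ A : Fin n → Fin n → Prop,
      IsOriented A ∧ SFree A k ∧ (n + k - 1) ^ 2 / 4 ≤ arcCount A := by
  set b := (n + k - 1) / 2
  have : NeZero b := ⟨by omega⟩
  let G := withSources (circulant b k) (Fin (n - b))
  have hdeg : ∀ x, inDeg (circulant b k) x = k - 1 := inDeg_circulant (by omega)
  have hG_oriented : IsOriented G := isOriented_withSources (isOriented_circulant (by omega))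
  have hG_free : SFree G k := sFree_withSources (by omega) fun x => by rw [hdeg]; omega
  let e : Fin n ≃ ZMod b ⊕ Fin (n - b) :=
    (Fintype.equivFinOfCardEq (by simp [ZMod.card]; omega)).symm
  refine ⟨fun u v => G (e u) (e v), hG_oriented.comap e, hG_free.comap e.injective, le_of_eq ?_⟩
  calc (n + k - 1) ^ 2 / 4 = b * (k - 1 + (n - b)) := by rw [sq_div_four_eq]; congr 1; omega
    _ = arcCount G := by rw [arcCount_withSources hdeg, ZMod.card, Fintype.card_fin]
    _ = _ := (arcCount_comap_equiv G e).symm
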